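/- Let (X_n)_{n≥0} be a weakly symmetric random walk on a regular language over a finite alphabet 𝒜 and let w₁, w₂ ∈ 𝒜* be words of length ≥ 2. Then the cones C(w₁) and C(w₂) are either nested or disjoint: C(w₁) ⊆ C(w₂), or C(w₂) ⊆ C(w₁), or C(w₁) ∩ C(w₂) = ∅. Moreover, if |w₁| = |w₂| then either C(w₁) = C(w₂) or C(w₁) ∩ C(w₂) = ∅. -/

import Mathlib

open MeasureTheory Filter Topology
open scoped ENNReal Classical

/-- A random walk on a regular language over the finite alphabet `A`:
a Markov chain on finite words whose one-step transitions replace at most the last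
two letters of the current word by a (nonempty, from long words) word of length at
most three, with probabilities `p` depending only on the last two letters of the
current word and on the replacing word. -/
structure RLRW (A : Type) [Fintype A] [DecidableEq A] where
  /-- the local transition probabilities -/
  p : List A → List A → ℝ
  /-- the full one-step transition probabilities between words -/
  step : List A → List A → ℝ
  step_nonneg : ∀ u v, 0 ≤ step u v
  step_hasSum : ∀ u, HasSum (step u) 1
  /-- from a word of length `≥ 2`, the last two letters are replaced by a word of
  length `1`, `2` or `3`, with probability depending only on these data -/
  step_long : ∀ (w x y : List A), x.length = 2 → 1 ≤ y.length → y.length ≤ 3 →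
    step (w ++ x) (w ++ y) = p x y
  /-- transitions from words of length `≤ 1` -/
  step_short : ∀ (x y : List A), x.length ≤ 1 → y.length ≤ x.length + 1 → step x y = p x y
  /-- no other transition is possible -/
  step_support : ∀ u v, 0 < step u v →
    ∃ w x y : List A, u = w ++ x ∧ v = w ++ y ∧ x.length = min u.length 2 ∧
      y.length ≤ x.length + 1 ∧ x.length ≤ y.length + 1

namespace RLRW

variable {A : Type} [Fintype A] [DecidableEq A]

/-- `n`-step transition probabilities `p⁽ⁿ⁾(u,v)`. -/
noncomputable def pstep (M : RLRW A) : ℕ → List A → List A → ℝ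
  | 0, u, v => if u = v then 1 else 0
  | (n + 1), u, v => ∑' w : List A, M.pstep n u w * M.step w v

/-- `n`-step transition probabilities where all the words visited at times `1,…,n`
are required to lie in the set `S`. -/
noncomputable def pstepIn (M : RLRW A) (S : Set (List A)) : ℕ → List A → List A → ℝ
  | 0, u, v => if u = v then 1 else 0
  | (n + 1), u, v => if v ∈ S then ∑' w : List A, M.pstepIn S n u w * M.step w v else 0

/-- The set `ℒ` of words accessible from the empty word. -/
def Lang (M : RLRW A) : Set (List A) := {w | ∃ n, 0 < M.pstep n [] w}

/-- Weak symmetry of the random walk. -/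
def WeaklySymmetric (M : RLRW A) : Prop := ∀ u v, 0 < M.step u v → 0 < M.step v u

/-- Suffix-irreducibility of the random walk. -/
def SuffixIrreducible (M : RLRW A) : Prop :=
  ∀ (w₀ : List A) (a₀ b₀ : A), w₀ ++ [a₀, b₀] ∈ M.Lang → ∀ a b : A,
    ∃ (n : ℕ) (w₁ : List A),
      0 < M.pstepIn {v | (w₀ ++ [a₀, b₀]).length ≤ v.length} n (w₀ ++ [a₀, b₀])
          (w₀ ++ w₁ ++ [a, b])

/-- Transience of the random walk restricted to `ℒ` (finiteness of the Green function). -/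
def Transient (M : RLRW A) : Prop := ∀ w ∈ M.Lang, Summable fun n => M.pstep n w w

/-- Recurrence of the random walk restricted to `ℒ`. -/
def Recurrent (M : RLRW A) : Prop := ∀ w ∈ M.Lang, ¬ Summable fun n => M.pstep n w w

/-- The entropy sequence `E[-log π_n(X_n)] = ∑_w π_n(w)·(-log π_n(w))`, where `π_n`
is the distribution of `X_n`. -/
noncomputable def entropySeq (M : RLRW A) (n : ℕ) : ℝ :=
  ∑' w : List A, M.pstep n [] w * (-Real.log (M.pstep n [] w))

/-- `X` is (a version of) the random walk given by `M`, started at the empty word,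
on the probability space `(Ω, P)`: its finite-dimensional distributions are the ones
prescribed by the one-step transition probabilities. -/
def IsRandomWalk (M : RLRW A) {Ω : Type} [MeasurableSpace Ω] (P : Measure Ω)
    (X : ℕ → Ω → List A) : Prop :=
  ∀ (n : ℕ) (w : ℕ → List A),
    P {ω | ∀ i ≤ n, X i ω = w i} =
      ENNReal.ofReal ((if w 0 = ([] : List A) then 1 else 0) *
        ∏ i ∈ Finset.range n, M.step (w i) (w (i + 1)))

/-- The word formed by the last two letters of `w`. -/
def lastTwo (w : List A) : List A := w.drop (w.length - 2)

/-- The cone rooted at `w₀`: all words `w` of length `≥ |w₀|` reachable from `w₀` by a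
path through words of length `≥ |w₀|`. -/
def Cone (M : RLRW A) (w₀ : List A) : Set (List A) :=
  {w | ∃ (n : ℕ) (f : ℕ → List A), f 0 = w₀ ∧ f n = w ∧
    (∀ i ≤ n, w₀.length ≤ (f i).length) ∧ ∀ i < n, 0 < M.step (f i) (f (i + 1))}

/-- The boundary `∂C(w)` of a cone. -/
def coneBoundary (M : RLRW A) (w : List A) : Set (List A) :=
  {w' | w' ∈ M.Cone w ∧ w'.length = w.length ∧ ∃ w'', w'' ∉ M.Cone w ∧ 0 < M.step w' w''}

/-- The random walk is expanding if every cone rooted at a word of `ℒ` contains two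
disjoint proper subcones rooted at words of `ℒ`. -/
def Expanding (M : RLRW A) : Prop :=
  ∀ w₀ ∈ M.Lang, 2 ≤ w₀.length →
    ∃ w₁ w₂ : List A, w₁ ∈ M.Lang ∧ w₂ ∈ M.Lang ∧ w₁ ∈ M.Cone w₀ ∧ w₂ ∈ M.Cone w₀ ∧
      M.Cone w₁ ⊂ M.Cone w₀ ∧ M.Cone w₂ ⊂ M.Cone w₀ ∧ M.Cone w₁ ∩ M.Cone w₂ = ∅

/-- Probability of a first visit to `v` at time exactly `n` (for `n ≥ 1`),
starting from `u`. -/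
noncomputable def firstVisit (M : RLRW A) : ℕ → List A → List A → ℝ
  | 0, _, _ => 0
  | 1, u, v => M.step u v
  | (n + 2), u, v => ∑' w : List A, if w = v then 0 else M.step u w * M.firstVisit (n + 1) w v

/-- The hitting probability `P[∃ n ≥ 0 : X_n = v | X_0 = u]`. -/
noncomputable def hitProb (M : RLRW A) (u v : List A) : ℝ :=
  if u = v then 1 else ∑' n : ℕ, M.firstVisit n u v

/-- The Greenian distance `d_Green(u,v) = - log P[∃ n ≥ 0 : X_n = v | X_0 = u]`. -/
noncomputable def dGreen (M : RLRW A) (u v : List A) : ℝ := -Real.log (M.hitProb u v)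

/-- The last-visit generating function `L(o,w|1)`. -/
noncomputable def lastVisitGF (M : RLRW A) (w : List A) : ℝ :=
  ∑' n : ℕ, M.pstepIn {v | v ≠ ([] : List A)} n [] w

end RLRW

theorem Relation.reflTransGen_iff_exists_seq {α : Type*} {r : α → α → Prop} {a b : α} :
    Relation.ReflTransGen r a b ↔
      ∃ (n : ℕ) (f : ℕ → α), f 0 = a ∧ f n = b ∧ ∀ i < n, r (f i) (f (i + 1)) := by
  constructor
  · intro h
    induction h using Relation.ReflTransGen.head_induction_on with
    | refl => exact ⟨0, fun _ => b, rfl, rfl, by simp⟩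
    | @head c d hcd _ ih =>
      obtain ⟨n, f, rfl, rfl, hf⟩ := ih
      refine ⟨n + 1, fun | 0 => c | i + 1 => f i, rfl, rfl, ?_⟩
      rintro (_ | i) hi
      · exact hcd
      · exact hf i (by omega)
  · rintro ⟨n, f, rfl, rfl, hf⟩
    induction n with
    | zero => exact .refl
    | succ n ih => exact .tail (ih fun i hi => hf i (by omega)) (hf n (by omega))

namespace RLRW

variable {A : Type} [Fintype A] [DecidableEq A] {M : RLRW A}

def StepAbove (M : RLRW A) (L : ℕ) (u v : List A) : Prop :=
  L ≤ u.length ∧ L ≤ v.length ∧ 0 < M.step u v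

theorem stepAbove_mono {L L' : ℕ} (h : L' ≤ L) : M.StepAbove L ≤ M.StepAbove L' :=
  fun _ _ ⟨hu, hv, hstep⟩ => ⟨h.trans hu, h.trans hv, hstep⟩

theorem WeaklySymmetric.symm_stepAbove (hWS : M.WeaklySymmetric) (L : ℕ) :
    Std.Symm (M.StepAbove L) :=
  ⟨fun _ _ ⟨hu, hv, hstep⟩ => ⟨hv, hu, hWS _ _ hstep⟩⟩

theorem mem_cone_iff {w₀ w : List A} :
    w ∈ M.Cone w₀ ↔ Relation.ReflTransGen (M.StepAbove w₀.length) w₀ w := by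
  rw [Relation.reflTransGen_iff_exists_seq]
  constructor
  · rintro ⟨n, f, h0, hn, hlen, hstep⟩
    exact ⟨n, f, h0, hn, fun i hi => ⟨hlen i hi.le, hlen (i + 1) hi, hstep i hi⟩⟩
  · rintro ⟨n, f, h0, hn, hf⟩
    refine ⟨n, f, h0, hn, ?_, fun i hi => (hf i hi).2.2⟩
    rintro (_ | i) hi
    · exact h0 ▸ le_rfl
    · exact (hf i hi).2.1

/-- Weak symmetry lets the path from `w₂` to the common point `u` be reversed, so `w₂ ∈ C(w₁)`;
any path above `|w₂|` also stays above `|w₁|`. -/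
theorem cone_subset_of_mem_inter (hWS : M.WeaklySymmetric) {w₁ w₂ u : List A}
    (hle : w₁.length ≤ w₂.length) (hu₁ : u ∈ M.Cone w₁) (hu₂ : u ∈ M.Cone w₂) :
    M.Cone w₂ ⊆ M.Cone w₁ := by
  have := hWS.symm_stepAbove w₂.length
  intro v hv
  rw [mem_cone_iff] at hu₁ hu₂ hv ⊢
  exact hu₁.trans <| Relation.ReflTransGen.mono (stepAbove_mono hle) _ _ <|
    (symm hu₂).trans hv

end RLRW

theorem cones_nested_or_disjoint_general
    {A : Type} [Fintype A] [DecidableEq A] (M : RLRW A)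
    (hWS : M.WeaklySymmetric)
    (w₁ w₂ : List A) :
    (M.Cone w₁ ⊆ M.Cone w₂ ∨ M.Cone w₂ ⊆ M.Cone w₁ ∨ M.Cone w₁ ∩ M.Cone w₂ = ∅) ∧
    (w₁.length = w₂.length →
      M.Cone w₁ = M.Cone w₂ ∨ M.Cone w₁ ∩ M.Cone w₂ = ∅) := by
  rcases Set.eq_empty_or_nonempty (M.Cone w₁ ∩ M.Cone w₂) with hdisj | ⟨u, hu₁, hu₂⟩
  · exact ⟨.inr (.inr hdisj), fun _ => .inr hdisj⟩
  refine ⟨?_, fun hlen => .inl ?_⟩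
  · rcases le_total w₁.length w₂.length with hle | hle
    · exact .inr (.inl (RLRW.cone_subset_of_mem_inter hWS hle hu₁ hu₂))
    · exact .inl (RLRW.cone_subset_of_mem_inter hWS hle hu₂ hu₁)
  · exact (RLRW.cone_subset_of_mem_inter hWS hlen.ge hu₂ hu₁).antisymm
      (RLRW.cone_subset_of_mem_inter hWS hlen.le hu₁ hu₂)

/-- For a weakly symmetric random walk on a regular language, any two
cones are either nested in each other or disjoint; if moreover the roots have equal
length, then the cones are either equal or disjoint. -/
theorem cones_nested_or_disjoint
    {A : Type} [Fintype A] [DecidableEq A] (M : RLRW A)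
    (hWS : M.WeaklySymmetric)
    (w₁ w₂ : List A) (h₁ : 2 ≤ w₁.length) (h₂ : 2 ≤ w₂.length) :
    (M.Cone w₁ ⊆ M.Cone w₂ ∨ M.Cone w₂ ⊆ M.Cone w₁ ∨ M.Cone w₁ ∩ M.Cone w₂ = ∅) ∧
    (w₁.length = w₂.length →
      M.Cone w₁ = M.Cone w₂ ∨ M.Cone w₁ ∩ M.Cone w₂ = ∅) :=
  cones_nested_or_disjoint_general M hWS w₁ w₂
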